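/- Let J̄ = (ε(F_{n-v}))^{-1} Q_{n-v} be the normalized matrix of maximum out forests of a weighted digraph G. Then for all vertices i and j: (1) J̄_{ii} ≥ J̄_{ji}; and (2) if J̄_{ij} > 0 then J̄_{ii} = J̄_{ji}. -/

import Mathlib

open scoped Classical
open Finset

variable {n : ℕ}

/-- The arc relation of a finite arc set. -/
def arcRel (F : Finset (Fin n × Fin n)) : Fin n → Fin n → Prop :=
  fun a b => (a, b) ∈ F

/-- A diverging forest: no directed cycles, and every vertex has in-degree at most 1. -/
def IsDivForest (F : Finset (Fin n × Fin n)) : Prop :=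
  (∀ v, ¬ Relation.TransGen (arcRel F) v v) ∧
  ∀ w z₁ z₂, (z₁, w) ∈ F → (z₂, w) ∈ F → z₁ = z₂

/-- `F` is a spanning diverging forest of the weighted digraph whose arcs are the
pairs of positive weight under `ε`. -/
def IsSpForest (ε : Fin n → Fin n → ℝ) (F : Finset (Fin n × Fin n)) : Prop :=
  (∀ p ∈ F, 0 < ε p.1 p.2) ∧ IsDivForest F

/-- The weight of a forest: the product of its arc weights. -/
noncomputable def fweight (ε : Fin n → Fin n → ℝ) (F : Finset (Fin n × Fin n)) : ℝ :=
  ∏ p ∈ F, ε p.1 p.2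

/-- The weight of a set of forests: the sum of the weights of its members. -/
noncomputable def swt (ε : Fin n → Fin n → ℝ)
    (S : Finset (Finset (Fin n × Fin n))) : ℝ :=
  ∑ F ∈ S, fweight ε F

/-- The set of spanning diverging forests with `k` arcs. -/
noncomputable def forestsK (ε : Fin n → Fin n → ℝ) (k : ℕ) :
    Finset (Finset (Fin n × Fin n)) :=
  Finset.univ.filter (fun F => IsSpForest ε F ∧ F.card = k)

/-- The set of spanning diverging forests with `k` arcs in which vertex `i` belongs to
the tree diverging from `j` (so `j` is a root and `i` is reachable from `j`). -/
noncomputable def forestsKji (ε : Fin n → Fin n → ℝ) (k : ℕ) (j i : Fin n) :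
    Finset (Finset (Fin n × Fin n)) :=
  (forestsK ε k).filter (fun F => (∀ u, (u, j) ∉ F) ∧ Relation.ReflTransGen (arcRel F) j i)

/-- The maximum number of arcs in a spanning diverging forest, equal to `n - v`
where `v` is the forest dimension. -/
noncomputable def maxArcs (ε : Fin n → Fin n → ℝ) : ℕ :=
  (Finset.univ.filter (fun F : Finset (Fin n × Fin n) => IsSpForest ε F)).sup Finset.card

/-- The Kirchhoff matrix of the weighted digraph with weights `ε`. -/
noncomputable def Kirchhoff (ε : Fin n → Fin n → ℝ) : Matrix (Fin n) (Fin n) ℝ :=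
  Matrix.of fun i j =>
    if i = j then ∑ k ∈ Finset.univ.filter (· ≠ i), ε k i else - ε j i

/-- The matrix of maximum out forests: entry `(i, j)` is the total weight of maximum
out forests in which `i` lies in the tree diverging from `j`. -/
noncomputable def Qmax (ε : Fin n → Fin n → ℝ) : Matrix (Fin n) (Fin n) ℝ :=
  Matrix.of fun i j => swt ε (forestsKji ε (maxArcs ε) j i)

/-- The normalized matrix of maximum out forests. -/
noncomputable def Jbar (ε : Fin n → Fin n → ℝ) : Matrix (Fin n) (Fin n) ℝ :=
  (swt ε (forestsK ε (maxArcs ε)))⁻¹ • Qmax ε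

/-!
Part (1) is monotonicity: a forest in which `i` is a root always has `i` in its own tree.
For part (2), `J̄_{ij} > 0` gives a path `j → ⋯ → i` of positive arcs, and we show that a
root `i` of any maximum forest then reaches `j`. Walk the path backwards: if `i` reaches the
head `c` of an arc `a → c` but not its tail `a`, then re-hanging `c` below `a` (replacing the
in-arc of `c`, or adding one if `c = i`) creates no cycle, so it yields a forest that either
has more arcs than a maximum one or is again maximum with root `i` but `c` cut off from `i`.
-/

open Relation

section Forests

variable {ε : Fin n → Fin n → ℝ} {E F : Finset (Fin n × Fin n)} {a b : Fin n}

lemma reflTransGen_arcRel_mono (h : E ⊆ F) {x y : Fin n}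
    (hxy : ReflTransGen (arcRel E) x y) : ReflTransGen (arcRel F) x y :=
  ReflTransGen.mono (fun _ _ hp => h hp) _ _ hxy

lemma reflTransGen_arcRel_insert {x y : Fin n}
    (h : ReflTransGen (arcRel (insert (a, b) E)) x y) :
    ReflTransGen (arcRel E) x y ∨
      (ReflTransGen (arcRel E) x a ∧ ReflTransGen (arcRel E) b y) := by
  induction h with
  | refl => exact Or.inl .refl
  | @tail y z _ hyz ih =>
    rcases mem_insert.mp hyz with hyz | hyz
    · obtain ⟨rfl, rfl⟩ := Prod.mk.inj hyz
      exact Or.inr ⟨ih.elim id And.left, .refl⟩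
    · exact ih.imp (·.tail hyz) fun ⟨hxa, hbz⟩ => ⟨hxa, hbz.tail hyz⟩

lemma not_transGen_arcRel_insert (hE : ∀ v, ¬ TransGen (arcRel E) v v)
    (hba : ¬ ReflTransGen (arcRel E) b a) (v : Fin n) :
    ¬ TransGen (arcRel (insert (a, b) E)) v v := by
  intro hv
  obtain ⟨w, hvw, hwv⟩ := TransGen.tail'_iff.mp hv
  rcases mem_insert.mp hwv with hwv | hwv
  · obtain ⟨rfl, rfl⟩ := Prod.mk.inj hwv
    rcases reflTransGen_arcRel_insert hvw with h | ⟨h, -⟩ <;> exact hba h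
  · rcases reflTransGen_arcRel_insert hvw with h | ⟨hva, hbw⟩
    · exact hE v (TransGen.tail' h hwv)
    · exact hba ((hbw.tail hwv).trans hva)

lemma IsDivForest.mono (hF : IsDivForest F) (h : E ⊆ F) : IsDivForest E :=
  ⟨fun v hv => hF.1 v (TransGen.mono (fun _ _ hp => h hp) _ _ hv),
    fun w _ _ h₁ h₂ => hF.2 w _ _ (h h₁) (h h₂)⟩

lemma IsDivForest.insert (hE : IsDivForest E) (hb : ∀ u, (u, b) ∉ E)
    (hba : ¬ ReflTransGen (arcRel E) b a) : IsDivForest (insert (a, b) E) := by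
  refine ⟨not_transGen_arcRel_insert hE.1 hba, fun w z₁ z₂ h₁ h₂ => ?_⟩
  rcases mem_insert.mp h₁ with h₁ | h₁ <;> rcases mem_insert.mp h₂ with h₂ | h₂
  · exact (Prod.mk.inj h₁).1.trans (Prod.mk.inj h₂).1.symm
  · exact absurd ((Prod.mk.inj h₁).2 ▸ h₂) (hb z₂)
  · exact absurd ((Prod.mk.inj h₂).2 ▸ h₁) (hb z₁)
  · exact hE.2 w z₁ z₂ h₁ h₂

lemma IsSpForest.mono (hF : IsSpForest ε F) (h : E ⊆ F) : IsSpForest ε E :=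
  ⟨fun p hp => hF.1 p (h hp), hF.2.mono h⟩

lemma IsSpForest.insert (hE : IsSpForest ε E) (hab : 0 < ε a b) (hb : ∀ u, (u, b) ∉ E)
    (hba : ¬ ReflTransGen (arcRel E) b a) : IsSpForest ε (insert (a, b) E) :=
  ⟨fun p hp => (mem_insert.mp hp).elim (· ▸ hab) (hE.1 p), hE.2.insert hb hba⟩

lemma IsSpForest.card_le_maxArcs (hF : IsSpForest ε F) : F.card ≤ maxArcs ε :=
  le_sup (f := Finset.card) (mem_filter.mpr ⟨mem_univ F, hF⟩)

lemma IsSpForest.fweight_pos (hF : IsSpForest ε F) : 0 < fweight ε F :=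
  prod_pos fun p hp => hF.1 p hp

lemma mem_forestsK {k : ℕ} : F ∈ forestsK ε k ↔ IsSpForest ε F ∧ F.card = k := by
  simp [forestsK]

lemma mem_forestsKji {k : ℕ} {j i : Fin n} :
    F ∈ forestsKji ε k j i ↔
      F ∈ forestsK ε k ∧ (∀ u, (u, j) ∉ F) ∧ ReflTransGen (arcRel F) j i :=
  mem_filter

lemma isSpForest_of_mem_forestsKji {k : ℕ} {j i : Fin n} (hF : F ∈ forestsKji ε k j i) :
    IsSpForest ε F :=
  (mem_forestsK.mp (mem_forestsKji.mp hF).1).1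

end Forests

section MaximumForests

variable {ε : Fin n → Fin n → ℝ} {F : Finset (Fin n × Fin n)} {a c i : Fin n}

lemma reflTransGen_of_root_of_pos (hF : F ∈ forestsK ε (maxArcs ε)) (hc : ∀ u, (u, c) ∉ F)
    (hac : 0 < ε a c) : ReflTransGen (arcRel F) c a := by
  by_contra hca
  have hle := ((mem_forestsK.mp hF).1.insert hac hc hca).card_le_maxArcs
  rw [card_insert_of_notMem (hc a), (mem_forestsK.mp hF).2] at hle
  omega

lemma insert_erase_mem_forestsK_maxArcs {p : Fin n} (hF : F ∈ forestsK ε (maxArcs ε))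
    (hpc : (p, c) ∈ F) (hac : 0 < ε a c) (hca : ¬ ReflTransGen (arcRel F) c a) :
    insert (a, c) (F.erase (p, c)) ∈ forestsK ε (maxArcs ε) := by
  obtain ⟨hsp, hcard⟩ := mem_forestsK.mp hF
  have hc : ∀ u, (u, c) ∉ F.erase (p, c) := fun u hu =>
    notMem_erase (p, c) F (hsp.2.2 c u p (mem_of_mem_erase hu) hpc ▸ hu)
  refine mem_forestsK.mpr ⟨(hsp.mono (erase_subset _ _)).insert hac hc
    fun h => hca (reflTransGen_arcRel_mono (erase_subset _ _) h), ?_⟩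
  rw [card_insert_of_notMem (hc a), card_erase_of_mem hpc, ← hcard]
  have := card_pos.mpr ⟨_, hpc⟩
  omega

lemma reflTransGen_of_root_of_posPath (hpath : ReflTransGen (fun x y => 0 < ε x y) a i) :
    ∀ F ∈ forestsK ε (maxArcs ε), (∀ u, (u, i) ∉ F) → ReflTransGen (arcRel F) i a := by
  induction hpath using ReflTransGen.head_induction_on with
  | refl => exact fun _ _ _ => .refl
  | @head a c hac _ ih =>
    intro F hF hroot
    by_contra hia
    have hic := ih F hF hroot
    have hca : ¬ ReflTransGen (arcRel F) c a := fun h => hia (hic.trans h)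
    by_cases hci : c = i
    · exact hca (reflTransGen_of_root_of_pos hF (hci ▸ hroot) hac)
    obtain ⟨p, -, hpc⟩ := hic.cases_tail.resolve_left hci
    set F' := insert (a, c) (F.erase (p, c))
    have hF' : F' ∈ forestsK ε (maxArcs ε) := insert_erase_mem_forestsK_maxArcs hF hpc hac hca
    have hroot' : ∀ u, (u, i) ∉ F' := fun u hu => (mem_insert.mp hu).elim
      (fun h => hci (Prod.mk.inj h).2.symm) fun h => hroot u (mem_of_mem_erase h)
    obtain ⟨q, hiq, hqc⟩ := (ih F' hF' hroot').cases_tail.resolve_left hci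
    obtain rfl : q = a := (mem_forestsK.mp hF').1.2.2 c q a hqc (mem_insert_self _ _)
    have hE : ReflTransGen (arcRel (F.erase (p, c))) i q :=
      (reflTransGen_arcRel_insert hiq).elim id And.left
    exact hia (reflTransGen_arcRel_mono (erase_subset _ _) hE)

lemma forestsKji_subset_self (k : ℕ) (j b : Fin n) :
    forestsKji ε k j b ⊆ forestsKji ε k j j := fun _ hF =>
  mem_forestsKji.mpr ⟨(mem_forestsKji.mp hF).1, (mem_forestsKji.mp hF).2.1, .refl⟩

lemma forestsKji_maxArcs_eq_self {j : Fin n}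
    (hpath : ReflTransGen (fun x y => 0 < ε x y) j i) :
    forestsKji ε (maxArcs ε) i j = forestsKji ε (maxArcs ε) i i := by
  refine (forestsKji_subset_self _ i j).antisymm fun F hF => ?_
  obtain ⟨hF, hroot, -⟩ := mem_forestsKji.mp hF
  exact mem_forestsKji.mpr ⟨hF, hroot, reflTransGen_of_root_of_posPath hpath F hF hroot⟩

lemma posPath_of_mem_forestsKji {k : ℕ} {j : Fin n} (hF : F ∈ forestsKji ε k j i) :
    ReflTransGen (fun x y => 0 < ε x y) j i :=
  ReflTransGen.mono (fun x y h => (isSpForest_of_mem_forestsKji hF).1 (x, y) h) _ _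
    (mem_forestsKji.mp hF).2.2

end MaximumForests

section Weights

variable {ε : Fin n → Fin n → ℝ} {S T : Finset (Finset (Fin n × Fin n))}

lemma swt_nonneg (hS : ∀ F ∈ S, IsSpForest ε F) : 0 ≤ swt ε S :=
  sum_nonneg fun F hF => (hS F hF).fweight_pos.le

lemma swt_mono (hST : S ⊆ T) (hT : ∀ F ∈ T, IsSpForest ε F) : swt ε S ≤ swt ε T :=
  sum_le_sum_of_subset_of_nonneg hST fun F hF _ => (hT F hF).fweight_pos.le

lemma Jbar_apply (i j : Fin n) :
    Jbar ε i j =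
      (swt ε (forestsK ε (maxArcs ε)))⁻¹ * swt ε (forestsKji ε (maxArcs ε) j i) :=
  rfl

end Weights

theorem stmt15_general (ε : Fin n → Fin n → ℝ) (i j : Fin n) :
    Jbar ε j i ≤ Jbar ε i i ∧ (0 < Jbar ε i j → Jbar ε i i = Jbar ε j i) := by
  have hnorm : 0 ≤ (swt ε (forestsK ε (maxArcs ε)))⁻¹ :=
    inv_nonneg.mpr (swt_nonneg fun _ hF => (mem_forestsK.mp hF).1)
  simp only [Jbar_apply]
  refine ⟨mul_le_mul_of_nonneg_left (swt_mono (forestsKji_subset_self _ i j)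
    fun _ => isSpForest_of_mem_forestsKji) hnorm, fun hpos => ?_⟩
  obtain ⟨F₀, hF₀⟩ := nonempty_of_sum_ne_zero (right_ne_zero_of_mul hpos.ne')
  rw [forestsKji_maxArcs_eq_self (posPath_of_mem_forestsKji hF₀)]

/-- Diagonal comparison for the normalized matrix of maximum out forests. -/
theorem stmt15 (ε : Fin n → Fin n → ℝ) (hnonneg : ∀ i j, 0 ≤ ε i j)
    (hloop : ∀ i, ε i i = 0) (i j : Fin n) :
    Jbar ε j i ≤ Jbar ε i i ∧ (0 < Jbar ε i j → Jbar ε i i = Jbar ε j i) :=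
  stmt15_general ε i j
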